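/- arXiv:2202.03060 — 2 statements merged into one kernel-verified Lean document; each statement's English description precedes it below -/
import Mathlib

section
/- For every controlled Markov process, the set of stationary state distributions induced by non-Markovian policies equals the set induced by Markovian policies: a probability distribution d on S satisfies d_t^π(s) → d(s) as t → ∞ (pointwise in s) for some non-Markovian policy π if and only if it satisfies this for some Markovian policy. -/
open scoped BigOperators

/-- A controlled Markov process over finite state space `S` and action space `A`:
a transition kernel `P` and an initial distribution `μ`. -/
structure CMP (S A : Type) [Fintype S] [Fintype A] where
  P : S → A → S → ℝ
  P_nonneg : ∀ s a s', 0 ≤ P s a s'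
  P_sum_one : ∀ s a, ∑ s', P s a s' = 1
  μ : S → ℝ
  μ_nonneg : ∀ s, 0 ≤ μ s
  μ_sum_one : ∑ s, μ s = 1

/-- A history of `t` steps: states `s_0, …, s_t` and actions `a_0, …, a_{t-1}`. -/
abbrev Hist (S A : Type) (t : ℕ) : Type := (Fin (t + 1) → S) × (Fin t → A)

/-- A continuation of `k` further steps: actions `a_0, …, a_{k-1}` together with the
states those actions lead to. -/
abbrev Contin (S A : Type) (k : ℕ) : Type := (Fin k → A) × (Fin k → S)

/-- A general (possibly non-Markovian, possibly randomized) policy: for every time `t`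
and history of length `t`, a probability distribution over actions. -/
structure Policy (S A : Type) [Fintype A] where
  p : ∀ t : ℕ, Hist S A t → A → ℝ
  nonneg : ∀ t h a, 0 ≤ p t h a
  sum_one : ∀ t h, ∑ a, p t h a = 1

/-- A Markovian (randomized, time-dependent) policy: for every time `t` and current
state `s`, a probability distribution over actions. -/
structure MPolicy (S A : Type) [Fintype A] where
  p : ℕ → S → A → ℝ
  nonneg : ∀ t s a, 0 ≤ p t s a
  sum_one : ∀ t s, ∑ a, p t s a = 1

/-- The last (current) state of a history. -/
def lastState {S A : Type} {t : ℕ} (h : Hist S A t) : S := h.1 (Fin.last t)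

/-- A Markovian policy viewed as a general policy. -/
def MPolicy.toPolicy {S A : Type} [Fintype A] (m : MPolicy S A) : Policy S A where
  p := fun t h a => m.p t (lastState h) a
  nonneg := fun t h a => m.nonneg t _ a
  sum_one := fun t h => m.sum_one t _

/-- The general policy induced by a deterministic non-Markovian policy
(a function from histories to actions). -/
def detPolicy {S A : Type} [Fintype A] [DecidableEq A] (f : ∀ t : ℕ, Hist S A t → A) :
    Policy S A where
  p := fun t h a => if a = f t h then 1 else 0
  nonneg := by intro t h a; split <;> norm_num
  sum_one := by intro t h; simp

/-- The length-`i` prefix of a history. -/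
def histTake {S A : Type} {t : ℕ} (h : Hist S A t) (i : ℕ) (hi : i ≤ t) : Hist S A i :=
  (fun j => h.1 ⟨(j : ℕ), by have := j.isLt; omega⟩,
   fun j => h.2 ⟨(j : ℕ), by have := j.isLt; omega⟩)

/-- The probability that policy `π` generates the history `h` when interacting with
the CMP `M` (initial state from `μ`, actions from `π`, transitions from `P`). -/
noncomputable def histProb {S A : Type} [Fintype S] [Fintype A]
    (M : CMP S A) (π : Policy S A) {t : ℕ} (h : Hist S A t) : ℝ :=
  M.μ (h.1 0) * ∏ i : Fin t,
    (π.p i (histTake h i (Nat.le_of_lt i.isLt)) (h.2 i) *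
      M.P (h.1 i.castSucc) (h.2 i) (h.1 i.succ))

/-- The `t`-step state distribution `d_t^π(s) = Pr(s_t = s)`. -/
noncomputable def stateDist {S A : Type} [Fintype S] [Fintype A] [DecidableEq S]
    (M : CMP S A) (π : Policy S A) (t : ℕ) (s : S) : ℝ :=
  ∑ h : Hist S A t, if lastState h = s then histProb M π h else 0

/-- Shannon entropy of a distribution on a finite set (`0 log 0 = 0` since `Real.log 0 = 0`). -/
noncomputable def entropy {S : Type} [Fintype S] (d : S → ℝ) : ℝ :=
  -∑ s, d s * Real.log (d s)

/-- The state visitation frequency of a trajectory with `n+1` states. -/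
noncomputable def visitFreq {S A : Type} [Fintype S] [DecidableEq S] {n : ℕ}
    (h : Hist S A n) (s : S) : ℝ :=
  (∑ i : Fin (n + 1), if h.1 i = s then (1 : ℝ) else 0) / ((n : ℝ) + 1)

/-- The marginal state distribution `d_T^π(s) = (1/T) ∑_{t<T} d_t^π(s)`. -/
noncomputable def marginalDist {S A : Type} [Fintype S] [Fintype A] [DecidableEq S]
    (M : CMP S A) (π : Policy S A) (T : ℕ) (s : S) : ℝ :=
  (1 / (T : ℝ)) * ∑ t ∈ Finset.range T, stateDist M π t s

/-- The `γ`-discounted state distribution `d_γ^π(s) = (1-γ) ∑_t γ^t d_t^π(s)`. -/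
noncomputable def discountedDist {S A : Type} [Fintype S] [Fintype A] [DecidableEq S]
    (M : CMP S A) (π : Policy S A) (γ : ℝ) (s : S) : ℝ :=
  (1 - γ) * ∑' t : ℕ, γ ^ t * stateDist M π t s

/-- Concatenation of a length-`t` history with a `k`-step continuation. -/
def histAppend {S A : Type} {t k : ℕ} (h : Hist S A t) (c : Contin S A k) : Hist S A (t + k) :=
  (fun j => if hj : (j : ℕ) ≤ t then h.1 ⟨(j : ℕ), by omega⟩
            else c.2 ⟨(j : ℕ) - t - 1, by have := j.isLt; omega⟩,
   fun j => if hj : (j : ℕ) < t then h.2 ⟨(j : ℕ), hj⟩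
            else c.1 ⟨(j : ℕ) - t, by have := j.isLt; omega⟩)

/-- The probability that, after the prefix history `h`, running `π` (conditioned on the
full history) produces the `k`-step continuation `c`. -/
noncomputable def contProb {S A : Type} [Fintype S] [Fintype A]
    (M : CMP S A) (π : Policy S A) {t k : ℕ} (h : Hist S A t) (c : Contin S A k) : ℝ :=
  ∏ i : Fin k,
    (π.p (t + (i : ℕ))
        (histTake (histAppend h c) (t + (i : ℕ)) (by have := i.isLt; omega))
        ((histAppend h c).2 ⟨t + (i : ℕ), by have := i.isLt; omega⟩) *
      M.P ((histAppend h c).1 ⟨t + (i : ℕ), by have := i.isLt; omega⟩)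
        ((histAppend h c).2 ⟨t + (i : ℕ), by have := i.isLt; omega⟩)
        ((histAppend h c).1 ⟨t + (i : ℕ) + 1, by have := i.isLt; omega⟩))

/-- The expected entropy of the state visitation frequency of the completed trajectory,
when running `π` for `k` further steps after the prefix history `h`. -/
noncomputable def expEntFrom {S A : Type} [Fintype S] [Fintype A] [DecidableEq S]
    (M : CMP S A) (π : Policy S A) {t : ℕ} (k : ℕ) (h : Hist S A t) : ℝ :=
  ∑ c : Contin S A k, contProb M π h c * entropy (visitFreq (histAppend h c))

/-- A history has positive probability (under some policy) iff its initial state and all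
its transitions have positive probability. -/
def Reachable {S A : Type} [Fintype S] [Fintype A] (M : CMP S A) {t : ℕ}
    (h : Hist S A t) : Prop :=
  0 < M.μ (h.1 0) ∧ ∀ i : Fin t, 0 < M.P (h.1 i.castSucc) (h.2 i) (h.1 i.succ)

/-!
Given any policy `π`, let the Markovian policy play `a` in state `s` at time `t` with probability
`Pr_π(s_t = s, a_t = a) / Pr_π(s_t = s)`. The next-state distribution
`d_{t+1}(s') = ∑_{s,a} Pr(s_t = s, a_t = a) P(s' | s, a)` depends on a policy only through its
state-action marginal at time `t`, and the Markovian policy reproduces that marginal as soon as it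
reproduces `d_t`; by induction both policies have the same `d_t` for every `t`, hence the same
limits. Conversely, a Markovian policy is a policy.
-/

section Histories

variable {S A : Type}

def extendHist {t : ℕ} (h : Hist S A t) (a : A) (s : S) : Hist S A (t + 1) :=
  (Fin.snoc h.1 s, Fin.snoc h.2 a)

@[simp]
lemma lastState_extendHist {t : ℕ} (h : Hist S A t) (a : A) (s : S) :
    lastState (extendHist h a s) = s := by
  simp [lastState, extendHist]

@[simp]
lemma histTake_self {t : ℕ} (h : Hist S A t) : histTake h t le_rfl = h := rfl

lemma histTake_extendHist {t : ℕ} (h : Hist S A t) (a : A) (s : S) {i : ℕ}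
    (hi : i ≤ t) (hi' : i ≤ t + 1) :
    histTake (extendHist h a s) i hi' = histTake h i hi := by
  ext j
  · exact Fin.snoc_castSucc (α := fun _ => S) (p := h.1) (i := ⟨j, by have := j.isLt; omega⟩) ..
  · exact Fin.snoc_castSucc (α := fun _ => A) (p := h.2) (i := ⟨j, by have := j.isLt; omega⟩) ..

def extendHistEquiv (S A : Type) (t : ℕ) : Hist S A t × A × S ≃ Hist S A (t + 1) where
  toFun x := extendHist x.1 x.2.1 x.2.2
  invFun h := ((Fin.init h.1, Fin.init h.2), h.2 (Fin.last t), h.1 (Fin.last (t + 1)))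
  left_inv := by
    rintro ⟨⟨hs, ha⟩, a, s⟩
    simp [extendHist]
  right_inv := by
    rintro ⟨hs, ha⟩
    simp [extendHist, Fin.snoc_init_self]

end Histories

section HistProb

variable {S A : Type} [Fintype S] [Fintype A]

lemma histProb_extendHist (M : CMP S A) (π : Policy S A) {t : ℕ} (h : Hist S A t)
    (a : A) (s : S) :
    histProb M π (extendHist h a s)
      = histProb M π h * π.p t h a * M.P (lastState h) a s := by
  simp only [histProb, Fin.prod_univ_castSucc, Fin.val_castSucc, Fin.val_last,
    histTake_extendHist, Fin.is_le', le_refl, histTake_self]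
  simp only [extendHist, lastState, Fin.succ_castSucc, Fin.succ_last, Fin.snoc_castSucc,
    Fin.snoc_last, ← Fin.castSucc_zero']
  ring

lemma histProb_nonneg (M : CMP S A) (π : Policy S A) {t : ℕ} (h : Hist S A t) :
    0 ≤ histProb M π h :=
  mul_nonneg (M.μ_nonneg _) (Finset.prod_nonneg fun _ _ =>
    mul_nonneg (π.nonneg _ _ _) (M.P_nonneg _ _ _))

end HistProb

section StateDist

variable {S A : Type} [Fintype S] [Fintype A] [DecidableEq S]

lemma stateDist_zero (M : CMP S A) (π : Policy S A) (s : S) :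
    stateDist M π 0 s = M.μ s := by
  rw [stateDist, Fintype.sum_prod_type, ← (Equiv.funUnique (Fin 1) S).symm.sum_comp]
  simp [histProb, lastState]

noncomputable def stateActionDist (M : CMP S A) (π : Policy S A) (t : ℕ) (s : S) (a : A) : ℝ :=
  ∑ h : Hist S A t, if lastState h = s then histProb M π h * π.p t h a else 0

lemma stateActionDist_nonneg (M : CMP S A) (π : Policy S A) (t : ℕ) (s : S) (a : A) :
    0 ≤ stateActionDist M π t s a :=
  Finset.sum_nonneg fun h _ => by
    split_ifs
    exacts [mul_nonneg (histProb_nonneg M π h) (π.nonneg _ _ _), le_rfl]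

lemma sum_stateActionDist (M : CMP S A) (π : Policy S A) (t : ℕ) (s : S) :
    ∑ a, stateActionDist M π t s a = stateDist M π t s := by
  simp only [stateActionDist]
  rw [Finset.sum_comm]
  refine Finset.sum_congr rfl fun h _ => ?_
  split_ifs
  · rw [← Finset.mul_sum, π.sum_one, mul_one]
  · exact Finset.sum_const_zero

lemma stateDist_nonneg (M : CMP S A) (π : Policy S A) (t : ℕ) (s : S) :
    0 ≤ stateDist M π t s :=
  sum_stateActionDist M π t s ▸ Finset.sum_nonneg fun a _ => stateActionDist_nonneg M π t s a

lemma stateActionDist_eq_zero (M : CMP S A) (π : Policy S A) {t : ℕ} {s : S}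
    (hs : stateDist M π t s = 0) (a : A) : stateActionDist M π t s a = 0 := by
  rw [← sum_stateActionDist] at hs
  exact (Finset.sum_eq_zero_iff_of_nonneg fun a _ => stateActionDist_nonneg M π t s a).1 hs a
    (Finset.mem_univ a)

lemma stateDist_succ (M : CMP S A) (π : Policy S A) (t : ℕ) (s' : S) :
    stateDist M π (t + 1) s' = ∑ s, ∑ a, stateActionDist M π t s a * M.P s a s' := by
  calc stateDist M π (t + 1) s'
      = ∑ h : Hist S A t, ∑ a, histProb M π h * π.p t h a * M.P (lastState h) a s' := by
        rw [stateDist, ← (extendHistEquiv S A t).sum_comp, Fintype.sum_prod_type]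
        refine Finset.sum_congr rfl fun h _ => ?_
        rw [Fintype.sum_prod_type]
        refine Finset.sum_congr rfl fun a _ => ?_
        simp [extendHistEquiv, histProb_extendHist]
    _ = ∑ s, ∑ a, stateActionDist M π t s a * M.P s a s' := by
        simp only [stateActionDist, Finset.sum_mul, ite_mul, zero_mul]
        conv_rhs => rw [Finset.sum_comm]
        rw [Finset.sum_comm]
        refine Finset.sum_congr rfl fun a _ => ?_
        rw [Finset.sum_comm]
        simp only [Finset.sum_ite_eq, Finset.mem_univ, if_true]

end StateDist

section Markovization

variable {S A : Type} [Fintype S] [Fintype A] [DecidableEq S]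

noncomputable def Policy.markovization [Nonempty A] (M : CMP S A) (π : Policy S A) :
    MPolicy S A where
  p t s a := if 0 < stateDist M π t s then stateActionDist M π t s a / stateDist M π t s
    else (Fintype.card A : ℝ)⁻¹
  nonneg t s a := by
    split_ifs with hs
    exacts [div_nonneg (stateActionDist_nonneg M π t s a) hs.le, by positivity]
  sum_one t s := by
    split_ifs with hs
    · rw [← Finset.sum_div, sum_stateActionDist, div_self hs.ne']
    · rw [Finset.sum_const, Finset.card_univ, nsmul_eq_mul,
        mul_inv_cancel₀ (Nat.cast_ne_zero.2 Fintype.card_ne_zero)]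

lemma Policy.markovization_mul_stateDist [Nonempty A] (M : CMP S A) (π : Policy S A) (t : ℕ)
    (s : S) (a : A) :
    (π.markovization M).p t s a * stateDist M π t s = stateActionDist M π t s a := by
  by_cases hs : 0 < stateDist M π t s
  · simp only [Policy.markovization, if_pos hs]
    exact div_mul_cancel₀ _ hs.ne'
  · have hs0 : stateDist M π t s = 0 := (not_lt.1 hs).antisymm (stateDist_nonneg M π t s)
    rw [hs0, mul_zero, stateActionDist_eq_zero M π hs0]

lemma stateActionDist_toPolicy (M : CMP S A) (m : MPolicy S A) (t : ℕ) (s : S) (a : A) :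
    stateActionDist M m.toPolicy t s a = m.p t s a * stateDist M m.toPolicy t s := by
  simp only [stateActionDist, stateDist, Finset.mul_sum]
  refine Finset.sum_congr rfl fun h _ => ?_
  split_ifs with hh
  · simp only [MPolicy.toPolicy, hh]
    ring
  · exact (mul_zero _).symm

theorem stateDist_markovization [Nonempty A] (M : CMP S A) (π : Policy S A) (t : ℕ) :
    stateDist M (π.markovization M).toPolicy t = stateDist M π t := by
  induction t with
  | zero => funext s; simp only [stateDist_zero]
  | succ t ih =>
    funext s'
    simp only [stateDist_succ, stateActionDist_toPolicy, ih, Policy.markovization_mul_stateDist]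

end Markovization

theorem stationary_state_distributions_eq_general
    {S A : Type} [Fintype S] [Fintype A] [Nonempty A] [DecidableEq S]
    (M : CMP S A) (d : S → ℝ) :
    (∃ π : Policy S A, ∀ s : S,
        Filter.Tendsto (fun t => stateDist M π t s) Filter.atTop (nhds (d s)))
    ↔ (∃ π' : MPolicy S A, ∀ s : S,
        Filter.Tendsto (fun t => stateDist M π'.toPolicy t s) Filter.atTop (nhds (d s))) := by
  constructor
  · rintro ⟨π, hπ⟩
    exact ⟨π.markovization M, fun s => by simpa only [stateDist_markovization] using hπ s⟩
  · rintro ⟨π', hπ'⟩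
    exact ⟨π'.toPolicy, hπ'⟩

/-- the set of stationary state distributions induced by non-Markovian
policies equals the set induced by Markovian policies. -/
theorem stationary_state_distributions_eq
    {S A : Type} [Fintype S] [Fintype A] [Nonempty S] [Nonempty A] [DecidableEq S]
    (M : CMP S A) (d : S → ℝ) (hd0 : ∀ s, 0 ≤ d s) (hd1 : ∑ s, d s = 1) :
    (∃ π : Policy S A, ∀ s : S,
        Filter.Tendsto (fun t => stateDist M π t s) Filter.atTop (nhds (d s)))
    ↔ (∃ π' : MPolicy S A, ∀ s : S,
        Filter.Tendsto (fun t => stateDist M π'.toPolicy t s) Filter.atTop (nhds (d s))) :=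
  stationary_state_distributions_eq_general M d
end

section
/- For every controlled Markov process, every horizon T ≥ 1, every t < T, and every prefix trajectory h_t of length t with positive probability, there exists a deterministic non-Markovian policy π_NM such that the expected entropy of the completed trajectory from h_t under π_NM attains the supremum over all (possibly randomized, history-dependent) policies: E_{h'∼p_{T−t}^{π_NM}}[H(d_{h_t ⊕ h'})] = sup_{π ∈ Π} E_{h'∼p_{T−t}^{π}}[H(d_{h_t ⊕ h'})]; in particular the supremum is attained. -/
open scoped BigOperators

/-
Kuhn's derandomization. Draw, independently for every history `x` of length `< t + k`, an
action `g x` with law `π(· | x)`, and play the deterministic policy `g`. Along a single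
trajectory every history occurs at most once, so `g` generates any continuation with exactly
the probability `π` does: `π` is a mixture, with weights `∏ₓ π(g x | x)`, of finitely many
deterministic policies. An expected payoff is then a convex combination of the payoffs of those
deterministic policies, and the best of them attains the supremum.
-/

open Finset

theorem Finset.prod_fiberwise_comp {ι κ M : Type*} [CommMonoid M] [DecidableEq κ] [Fintype κ]
    (s : Finset ι) (g : ι → κ) (f : κ → ι → M) :
    ∏ j, ∏ i ∈ s with g i = j, f j i = ∏ i ∈ s, f (g i) i := by
  rw [← prod_fiberwise s g (fun i => f (g i) i)]
  exact prod_congr rfl fun j _ => prod_congr rfl fun i hi => by rw [(mem_filter.1 hi).2]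

section ProductMixture

variable {ι κ B R : Type*} [Fintype B] [DecidableEq B] [CommSemiring R]

theorem sum_mul_prod_ite_eq_of_card_le_one (p : B → R) (hp : ∑ b, p b = 1) {s : Finset κ}
    (hs : #s ≤ 1) (a : κ → B) :
    ∑ b, p b * ∏ i ∈ s, (if a i = b then 1 else 0) = ∏ i ∈ s, p (a i) := by
  rcases Nat.le_one_iff_eq_zero_or_eq_one.1 hs with hs | hs
  · simp [card_eq_zero.1 hs, hp]
  · obtain ⟨i, rfl⟩ := card_eq_one.1 hs
    simp

/-- Under the product of the laws `p n`, the coordinates `node i` of a random `g : ι → B` take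
the prescribed values `act i` with probability `∏ i, p (node i) (act i)`. -/
theorem sum_prod_mul_prod_ite_eq_prod [Fintype ι] [DecidableEq ι] [Fintype κ]
    (p : ι → B → R) (hp : ∀ n, ∑ b, p n b = 1) {node : κ → ι} (hnode : node.Injective)
    (act : κ → B) :
    ∑ g : ι → B, (∏ n, p n (g n)) * ∏ i, (if act i = g (node i) then 1 else 0)
      = ∏ i, p (node i) (act i) := by
  have hfiber : ∀ n, #{i | node i = n} ≤ 1 := fun n => card_le_one.2 fun i hi j hj =>
    hnode ((mem_filter.1 hi).2.trans (mem_filter.1 hj).2.symm)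
  calc _ = ∑ g : ι → B,
          ∏ n, p n (g n) * ∏ i with node i = n, (if act i = g n then 1 else 0) := by
        refine sum_congr rfl fun g _ => ?_
        rw [prod_mul_distrib, prod_fiberwise_comp _ node fun n i => if act i = g n then 1 else 0]
    _ = ∏ n, ∑ b, p n b * ∏ i with node i = n, (if act i = b then 1 else 0) :=
        (Fintype.prod_sum fun n b =>
          p n b * ∏ i with node i = n, (if act i = b then 1 else 0)).symm
    _ = ∏ n, ∏ i with node i = n, p n (act i) :=
        prod_congr rfl fun n _ => sum_mul_prod_ite_eq_of_card_le_one _ (hp n) (hfiber n) act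
    _ = _ := prod_fiberwise_comp _ node fun n i => p n (act i)

end ProductMixture

/-- Histories of length `< n`, the decision points of the first `n` steps. -/
abbrev HistBelow (S A : Type) (n : ℕ) : Type := (t : Fin n) × Hist S A t

section Derandomization

variable {S A : Type} [Fintype A]

noncomputable def extendRule [Nonempty A] {n : ℕ} (g : HistBelow S A n → A) :
    ∀ t : ℕ, Hist S A t → A :=
  fun t h => if ht : t < n then g ⟨⟨t, ht⟩, h⟩ else Classical.arbitrary A

theorem detPolicy_extendRule_p [DecidableEq A] [Nonempty A] {n : ℕ} (g : HistBelow S A n → A)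
    {t : ℕ} (ht : t < n) (h : Hist S A t) (a : A) :
    (detPolicy (extendRule g)).p t h a = if a = g ⟨⟨t, ht⟩, h⟩ then 1 else 0 := by
  simp only [detPolicy, extendRule, dif_pos ht]

variable [Fintype S]

noncomputable def ruleWeight (π : Policy S A) {n : ℕ} (g : HistBelow S A n → A) : ℝ :=
  ∏ x, π.p x.1 x.2 (g x)

theorem ruleWeight_nonneg (π : Policy S A) {n : ℕ} (g : HistBelow S A n → A) :
    0 ≤ ruleWeight π g :=
  prod_nonneg fun _ _ => π.nonneg _ _ _

variable [DecidableEq S] [DecidableEq A]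

theorem sum_ruleWeight (π : Policy S A) (n : ℕ) :
    ∑ g : HistBelow S A n → A, ruleWeight π g = 1 := by
  unfold ruleWeight
  rw [← Fintype.prod_sum fun (x : HistBelow S A n) a => π.p x.1 x.2 a]
  exact prod_eq_one fun x _ => π.sum_one _ _

theorem contProb_eq_sum_ruleWeight_mul [Nonempty A] (M : CMP S A) (π : Policy S A) {t k : ℕ}
    (h : Hist S A t) (c : Contin S A k) :
    contProb M π h c
      = ∑ g : HistBelow S A (t + k) → A,
          ruleWeight π g * contProb M (detPolicy (extendRule g)) h c := by
  set node : Fin k → HistBelow S A (t + k) := fun i =>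
    ⟨⟨t + i, by omega⟩, histTake (histAppend h c) (t + i) (by omega)⟩
  have hnode : node.Injective := fun i j hij => Fin.ext (by simpa [node] using congrArg (·.1) hij)
  set act : Fin k → A := fun i => (histAppend h c).2 ⟨t + i, by omega⟩
  set q : Fin k → ℝ := fun i =>
    M.P ((histAppend h c).1 ⟨t + i, by omega⟩) (act i)
      ((histAppend h c).1 ⟨t + i + 1, by omega⟩)
  have hdet : ∀ g, contProb M (detPolicy (extendRule g)) h c
      = (∏ i, if act i = g (node i) then 1 else 0) * ∏ i, q i := fun g => by
    rw [contProb, ← prod_mul_distrib]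
    exact prod_congr rfl fun i _ => by rw [detPolicy_extendRule_p g (by omega)]
  calc contProb M π h c = (∏ i, π.p (node i).1 (node i).2 (act i)) * ∏ i, q i :=
        prod_mul_distrib
    _ = (∑ g, ruleWeight π g * ∏ i, if act i = g (node i) then 1 else 0) * ∏ i, q i := by
        rw [← sum_prod_mul_prod_ite_eq_prod (fun x a => π.p x.1 x.2 a)
          (fun _ => π.sum_one _ _) hnode]
        rfl
    _ = _ := by simp_rw [hdet, sum_mul, mul_assoc]

theorem sum_contProb_mul_eq_sum_ruleWeight_mul [Nonempty A] (M : CMP S A) (π : Policy S A)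
    {t k : ℕ} (h : Hist S A t) (F : Contin S A k → ℝ) :
    ∑ c, contProb M π h c * F c
      = ∑ g : HistBelow S A (t + k) → A,
          ruleWeight π g * ∑ c, contProb M (detPolicy (extendRule g)) h c * F c := by
  simp_rw [contProb_eq_sum_ruleWeight_mul M π h, sum_mul, mul_sum, mul_assoc]
  exact sum_comm

theorem exists_detPolicy_forall_le [Nonempty A] (M : CMP S A) {t : ℕ} (h : Hist S A t) (k : ℕ)
    (F : Contin S A k → ℝ) :
    ∃ f : ∀ t' : ℕ, Hist S A t' → A, ∀ π : Policy S A,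
      ∑ c, contProb M π h c * F c ≤ ∑ c, contProb M (detPolicy f) h c * F c := by
  set payoff : (HistBelow S A (t + k) → A) → ℝ :=
    fun g => ∑ c, contProb M (detPolicy (extendRule g)) h c * F c
  obtain ⟨g₀, -, hg₀⟩ := exists_max_image univ payoff univ_nonempty
  refine ⟨extendRule g₀, fun π => ?_⟩
  calc _ = ∑ g, ruleWeight π g * payoff g := sum_contProb_mul_eq_sum_ruleWeight_mul M π h F
    _ ≤ ∑ g, ruleWeight π g * payoff g₀ := sum_le_sum fun g _ =>
        mul_le_mul_of_nonneg_left (hg₀ g (mem_univ g)) (ruleWeight_nonneg π g)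
    _ = payoff g₀ := by rw [← sum_mul, sum_ruleWeight, one_mul]

end Derandomization

theorem deterministic_policy_attains_sup_expected_entropy_from_prefix_general
    {S A : Type} [Fintype S] [Fintype A] [Nonempty A]
    [DecidableEq S] [DecidableEq A]
    (M : CMP S A) (T t : ℕ)
    (h : Hist S A t) :
    ∃ f : ∀ t' : ℕ, Hist S A t' → A,
      expEntFrom M (detPolicy f) (T - 1 - t) h
        = ⨆ π : Policy S A, expEntFrom M π (T - 1 - t) h := by
  obtain ⟨f, hf⟩ :=
    exists_detPolicy_forall_le M h (T - 1 - t) fun c => entropy (visitFreq (histAppend h c))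
  have : Nonempty (Policy S A) := ⟨detPolicy f⟩
  exact ⟨f, le_antisymm (le_ciSup ⟨_, Set.forall_mem_range.2 hf⟩ _) (ciSup_le hf)⟩

/-- for every CMP, horizon `T ≥ 1`, time `t < T`, and prefix trajectory
`h_t` of length `t` (with `t+1` states, hence `T - 1 - t` remaining steps to complete a
length-`T` trajectory) with positive probability, there is a deterministic
non-Markovian policy whose expected completed-trajectory entropy attains the supremum
over all (possibly randomized, history-dependent) policies. -/
theorem deterministic_policy_attains_sup_expected_entropy_from_prefix
    {S A : Type} [Fintype S] [Fintype A] [Nonempty S] [Nonempty A]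
    [DecidableEq S] [DecidableEq A]
    (M : CMP S A) (T t : ℕ) (hT : 1 ≤ T) (ht : t < T)
    (h : Hist S A t) (hpos : Reachable M h) :
    ∃ f : ∀ t' : ℕ, Hist S A t' → A,
      expEntFrom M (detPolicy f) (T - 1 - t) h
        = ⨆ π : Policy S A, expEntFrom M π (T - 1 - t) h :=
  deterministic_policy_attains_sup_expected_entropy_from_prefix_general M T t h
end
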